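/- Let s ≤ t and let r ≥ 0. The graph G(r) := K_{s-1} × (disjoint union of r copies of K_t), the join of a clique on s−1 vertices with r disjoint t-cliques, does not contain K_{s,t} as a subgraph, has s−1+rt vertices, and has exactly C(s−1,2) + (s−1+(t−1)/2)·rt edges, i.e. C(s−1,2) + (s−1)rt + r·C(t,2). -/

import Mathlib

open SimpleGraph

/-- The join (product) of two graphs: disjoint union plus all cross edges. -/
def gJoin {α β : Type*} (G : SimpleGraph α) (H : SimpleGraph β) : SimpleGraph (α ⊕ β) where
  Adj u v := match u, v with
    | Sum.inl a, Sum.inl b => G.Adj a b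
    | Sum.inr a, Sum.inr b => H.Adj a b
    | _, _ => True
  symm := by constructor; rintro (a|a) (b|b) h <;> simp_all <;> exact h.symm
  loopless := by
    constructor
    rintro (a|a) h
    · exact G.irrefl h
    · exact H.irrefl h

/-- `H` is contained in `G` as a (not necessarily induced) subgraph. -/
def Contains {β α : Type*} (H : SimpleGraph β) (G : SimpleGraph α) : Prop :=
  ∃ f : H →g G, Function.Injective f

/-- The complete bipartite graph `K_{s,t}`. -/
def KBip (s t : ℕ) : SimpleGraph (Fin s ⊕ Fin t) := completeBipartiteGraph (Fin s) (Fin t)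

/-- A cograph: a graph with no induced path on four vertices. -/
def IsCograph {α : Type*} (G : SimpleGraph α) : Prop :=
  IsEmpty (pathGraph 4 ↪g G)

/-- The disjoint union of r copies of the clique K_t. -/
def manyCliques (r t : ℕ) : SimpleGraph (Fin r × Fin t) where
  Adj x y := x.1 = y.1 ∧ x ≠ y
  symm := by constructor; rintro x y ⟨h1, h2⟩; exact ⟨h1.symm, h2.symm⟩
  loopless := by constructor; rintro x ⟨h1, h2⟩; exact h2 rfl

open Finset

/-!
Fewer than `s` vertices lie in the clique `K_{s-1}`, so an embedding of `K_{s,t}` (with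
`s ≤ t`) sends a vertex of each side into the copies of `K_t`. These two images are adjacent,
hence in the same copy, and every other vertex sent outside `K_{s-1}` is adjacent to one of them,
so it lands in that copy too. The embedding then fits into `s - 1 + t < s + t` vertices.

For the edge count, the handshake lemma shows that a join `G × H` has
`|E(G)| + |E(H)| + |G| |H|` edges.
-/

section Join

variable {α β : Type*} (G : SimpleGraph α) (H : SimpleGraph β)

@[simp] lemma gJoin_adj_inl_inl {a b : α} : (gJoin G H).Adj (.inl a) (.inl b) ↔ G.Adj a b :=
  Iff.rfl
@[simp] lemma gJoin_adj_inl_inr (a : α) (b : β) : (gJoin G H).Adj (.inl a) (.inr b) := trivial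
@[simp] lemma gJoin_adj_inr_inl (b : β) (a : α) : (gJoin G H).Adj (.inr b) (.inl a) := trivial
@[simp] lemma gJoin_adj_inr_inr {a b : β} : (gJoin G H).Adj (.inr a) (.inr b) ↔ H.Adj a b :=
  Iff.rfl

instance [DecidableRel G.Adj] [DecidableRel H.Adj] : DecidableRel (gJoin G H).Adj
  | .inl _, .inl _ => inferInstanceAs (Decidable (G.Adj _ _))
  | .inl _, .inr _ => .isTrue trivial
  | .inr _, .inl _ => .isTrue trivial
  | .inr _, .inr _ => inferInstanceAs (Decidable (H.Adj _ _))

variable [Fintype α] [Fintype β] [DecidableRel G.Adj] [DecidableRel H.Adj]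

lemma gJoin_neighborFinset_inl (a : α) :
    (gJoin G H).neighborFinset (.inl a) = (G.neighborFinset a).disjSum univ := by
  ext (b | b) <;> simp

lemma gJoin_neighborFinset_inr (b : β) :
    (gJoin G H).neighborFinset (.inr b) = univ.disjSum (H.neighborFinset b) := by
  ext (a | a) <;> simp

lemma gJoin_degree_inl (a : α) : (gJoin G H).degree (.inl a) = G.degree a + Fintype.card β := by
  rw [← card_neighborFinset_eq_degree, gJoin_neighborFinset_inl, card_disjSum,
    card_neighborFinset_eq_degree, card_univ]

lemma gJoin_degree_inr (b : β) : (gJoin G H).degree (.inr b) = Fintype.card α + H.degree b := by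
  rw [← card_neighborFinset_eq_degree, gJoin_neighborFinset_inr, card_disjSum,
    card_neighborFinset_eq_degree, card_univ]

lemma card_edgeFinset_gJoin [DecidableEq α] [DecidableEq β] :
    #(gJoin G H).edgeFinset =
      #G.edgeFinset + #H.edgeFinset + Fintype.card α * Fintype.card β := by
  have h := (gJoin G H).sum_degrees_eq_twice_card_edges
  simp only [Fintype.sum_sum_type, gJoin_degree_inl, gJoin_degree_inr, sum_add_distrib,
    sum_const, card_univ, smul_eq_mul] at h
  rw [G.sum_degrees_eq_twice_card_edges, H.sum_degrees_eq_twice_card_edges] at h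
  linarith

end Join

@[simp] lemma manyCliques_adj {r t : ℕ} {x y : Fin r × Fin t} :
    (manyCliques r t).Adj x y ↔ x.1 = y.1 ∧ x ≠ y := Iff.rfl

instance (r t : ℕ) : DecidableRel (manyCliques r t).Adj :=
  fun x y => inferInstanceAs (Decidable (x.1 = y.1 ∧ x ≠ y))

lemma manyCliques_neighborFinset (r t : ℕ) (w : Fin r × Fin t) :
    (manyCliques r t).neighborFinset w =
      (univ.map (Function.Embedding.sectR w.1 (Fin t))).erase w := by
  ext ⟨c, j⟩
  simp only [mem_neighborFinset, manyCliques_adj, mem_erase, mem_map, mem_univ, true_and,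
    Function.Embedding.sectR_apply, Prod.mk.injEq, exists_eq_right]
  tauto

lemma manyCliques_isRegularOfDegree (r t : ℕ) :
    (manyCliques r t).IsRegularOfDegree (t - 1) := by
  intro w
  rw [← card_neighborFinset_eq_degree, manyCliques_neighborFinset, card_erase_of_mem (by simp),
    card_map, card_univ, Fintype.card_fin]

lemma card_edgeFinset_manyCliques (r t : ℕ) :
    #(manyCliques r t).edgeFinset = r * t.choose 2 := by
  have := (manyCliques r t).sum_degrees_eq_twice_card_edges
  simp only [(manyCliques_isRegularOfDegree r t).degree_eq, sum_const, card_univ, smul_eq_mul,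
    Fintype.card_prod, Fintype.card_fin] at this
  obtain ⟨k, hk⟩ := Nat.even_mul_pred_self t
  rw [mul_assoc, hk] at this
  rw [Nat.choose_two_right, hk, ← two_mul, Nat.mul_div_cancel_left _ two_pos]
  linarith

section Counting

variable {ι α β : Type*} [Fintype ι] [Fintype α]

lemma Fintype.card_le_of_injective_of_forall_isLeft {f : ι → α ⊕ β}
    (hf : Function.Injective f) (h : ∀ i, (f i).isLeft) :
    Fintype.card ι ≤ Fintype.card α := by
  refine Fintype.card_le_of_injective (fun i => (f i).getLeft (h i)) fun i j hij => hf ?_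
  rw [← Sum.inl_getLeft (f i) (h i), ← Sum.inl_getLeft (f j) (h j)]
  exact congrArg Sum.inl hij

lemma Fintype.card_le_of_injective_of_forall_inr_fst_eq {γ δ : Type*} [Fintype δ]
    {f : ι → α ⊕ γ × δ} (hf : Function.Injective f) (c : γ)
    (h : ∀ i w, f i = .inr w → w.1 = c) :
    Fintype.card ι ≤ Fintype.card α + Fintype.card δ := by
  rw [← Fintype.card_sum]
  refine Fintype.card_le_of_injective (Sum.map id Prod.snd ∘ f) fun i j hij => hf ?_
  rcases hi : f i with a | v <;> rcases hj : f j with b | w <;>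
    simp only [Function.comp_apply, hi, hj, Sum.map_inl, Sum.map_inr, id, reduceCtorEq,
      Sum.inl.injEq, Sum.inr.injEq] at hij ⊢
  · exact hij
  · exact Prod.ext ((h i v hi).trans (h j w hj).symm) hij

end Counting

section KBipFree

variable {s t r : ℕ}

lemma KBip_hom_gJoin_manyCliques_cases {α : Type*} {G : SimpleGraph α}
    (f : KBip s t →g gJoin G (manyCliques r t)) :
    (∀ x, (f (.inl x)).isLeft) ∨ (∀ z, (f (.inr z)).isLeft) ∨
      ∃ c, ∀ v w, f v = .inr w → w.1 = c := by
  have block {x z p q} (hp : f (.inl x) = .inr p) (hq : f (.inr z) = .inr q) : p.1 = q.1 := by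
    have := f.map_adj (show (KBip s t).Adj (.inl x) (.inr z) by simp [KBip])
    rw [hp, hq] at this
    exact this.1
  by_cases hL : ∀ x, (f (.inl x)).isLeft
  · exact .inl hL
  by_cases hR : ∀ z, (f (.inr z)).isLeft
  · exact .inr (.inl hR)
  push Not at hL hR
  obtain ⟨x, hx⟩ := hL
  obtain ⟨z, hz⟩ := hR
  obtain ⟨p, hp⟩ := Sum.isRight_iff.1 (Sum.not_isLeft.1 hx)
  obtain ⟨q, hq⟩ := Sum.isRight_iff.1 (Sum.not_isLeft.1 hz)
  refine .inr (.inr ⟨q.1, ?_⟩)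
  rintro (y | y) w hw
  · exact block hw hq
  · exact (block hp hw).symm.trans (block hp hq)

theorem not_contains_KBip_gJoin_manyCliques {α : Type*} [Fintype α] (G : SimpleGraph α)
    (hα : Fintype.card α < s) (hst : s ≤ t) :
    ¬ Contains (KBip s t) (gJoin G (manyCliques r t)) := by
  rintro ⟨f, hf⟩
  rcases KBip_hom_gJoin_manyCliques_cases f with hL | hR | ⟨c, hc⟩
  · have := Fintype.card_le_of_injective_of_forall_isLeft (hf.comp Sum.inl_injective) hL
    simp only [Fintype.card_fin] at this
    omega
  · have := Fintype.card_le_of_injective_of_forall_isLeft (hf.comp Sum.inr_injective) hR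
    simp only [Fintype.card_fin] at this
    omega
  · have := Fintype.card_le_of_injective_of_forall_inr_fst_eq hf c hc
    simp only [Fintype.card_sum, Fintype.card_fin] at this
    omega

end KBipFree

theorem lower_bound_construction (s t r : ℕ) (hs : 1 ≤ s) (hst : s ≤ t) :
    ¬ Contains (KBip s t) (gJoin (completeGraph (Fin (s - 1))) (manyCliques r t)) ∧
    Nat.card (Fin (s - 1) ⊕ Fin r × Fin t) = s - 1 + r * t ∧
    Nat.card (gJoin (completeGraph (Fin (s - 1))) (manyCliques r t)).edgeSet =
      (s - 1) * (s - 2) / 2 + (s - 1) * (r * t) + r * (t * (t - 1) / 2) := by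
  have hK : Fintype.card (Fin (s - 1)) < s := by rw [Fintype.card_fin]; omega
  refine ⟨not_contains_KBip_gJoin_manyCliques _ hK hst, by simp, ?_⟩
  rw [Nat.card_eq_fintype_card, ← edgeFinset_card, card_edgeFinset_gJoin,
    card_edgeFinset_top_eq_card_choose_two, card_edgeFinset_manyCliques]
  simp only [Fintype.card_fin, Fintype.card_prod, Nat.choose_two_right, Nat.sub_sub]
  ring
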